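/- Let φ : L → L' be a homomorphism of co-Heyting algebras (preserving ⊥, ⊤, ⊔, ⊓ and \). Then for every natural number d and every a ∈ L, if codim_L a ≥ d then codim_{L'} φ(a) ≥ d; that is, φ(dL) ⊆ dL'. -/

import Mathlib

/-!
Prime filters pull back along `φ`, so a prime filter `p'` of `L'` containing `φ a` yields the
prime filter `φ⁻¹ p'` containing `a`, together with a descending chain below it. The chain is
pushed forward one step at a time by going down: if `q ⊊ φ⁻¹ p'`, pick `b ∈ φ⁻¹ p' \ q` and
separate the filter generated by `φ q` from the ideal generated by `p'ᶜ` and `φ b` with the prime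
ideal theorem. The two are disjoint thanks to the difference operation: `φ x ≤ c ⊔ φ b` means
`φ (x \ b) ≤ c`, while `x \ b ∈ q` because `x ≤ b ⊔ x \ b` and `b ∉ q`.
-/

/-- A prime filter of a bounded lattice: upward closed, closed under `⊓`,
contains `⊤`, does not contain `⊥`, and prime with respect to `⊔`. -/
def IsPrimeFilter {L : Type*} [Lattice L] [BoundedOrder L] (p : Set L) : Prop :=
  (∀ x ∈ p, ∀ y : L, x ≤ y → y ∈ p) ∧
  (∀ x ∈ p, ∀ y ∈ p, x ⊓ y ∈ p) ∧
  (⊤ : L) ∈ p ∧ (⊥ : L) ∉ p ∧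
  ∀ x y : L, x ⊔ y ∈ p → x ∈ p ∨ y ∈ p

/-- `dim a ≥ n`: there is a strictly increasing chain `p 0 ⊊ p 1 ⊊ ⋯ ⊊ p n`
of prime filters with `a ∈ p 0`. -/
def DimGE {L : Type*} [Lattice L] [BoundedOrder L] (a : L) (n : ℕ) : Prop :=
  ∃ p : Fin (n + 1) → Set L, (∀ i, IsPrimeFilter (p i)) ∧
    (∀ i j : Fin (n + 1), i < j → p i ⊂ p j) ∧ a ∈ p 0

/-- `codim a ≥ n`: every prime filter `p` containing `a` admits a strictly
increasing chain `q n ⊊ ⋯ ⊊ q 1 ⊊ q 0 = p` of prime filters. -/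
def CodimGE {L : Type*} [Lattice L] [BoundedOrder L] (a : L) (n : ℕ) : Prop :=
  ∀ p : Set L, IsPrimeFilter p → a ∈ p →
    ∃ q : Fin (n + 1) → Set L, (∀ i, IsPrimeFilter (q i)) ∧
      (∀ i j : Fin (n + 1), i < j → q j ⊂ q i) ∧ q 0 = p

/-- The strong order: `b ≪ a` iff for every `c`, `a ≤ b ⊔ c` implies `a ≤ c`. -/
def StrongBelow {L : Type*} [Lattice L] (b a : L) : Prop :=
  ∀ c : L, a ≤ b ⊔ c → a ≤ c

section PrimeFilter

variable {L : Type*}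

lemma IsPrimeFilter.comap [Lattice L] [BoundedOrder L] {L' F : Type*} [Lattice L']
    [BoundedOrder L'] [FunLike F L L'] [BoundedLatticeHomClass F L L'] (f : F) {p : Set L'}
    (hp : IsPrimeFilter p) : IsPrimeFilter (f ⁻¹' p) := by
  obtain ⟨hup, hinf, htop, hbot, hprime⟩ := hp
  refine ⟨fun x hx y hxy => hup _ hx _ (OrderHomClass.mono f hxy), fun x hx y hy => ?_,
    ?_, ?_, fun x y hxy => hprime _ _ ?_⟩
  · simpa only [Set.mem_preimage, map_inf] using hinf _ hx _ hy
  · simpa only [Set.mem_preimage, map_top] using htop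
  · simpa only [Set.mem_preimage, map_bot] using hbot
  · simpa only [Set.mem_preimage, map_sup] using hxy

lemma IsPrimeFilter.isIdeal_compl [Lattice L] [BoundedOrder L] {p : Set L}
    (hp : IsPrimeFilter p) : Order.IsIdeal pᶜ := by
  obtain ⟨hup, -, -, hbot, hprime⟩ := hp
  refine ⟨fun x y hxy hy hx => hy (hup _ hx _ hxy), ⟨⊥, hbot⟩, fun x hx y hy => ?_⟩
  refine ⟨x ⊔ y, fun hxy => ?_, le_sup_left, le_sup_right⟩
  exact (hprime x y hxy).elim hx hy

lemma Order.Ideal.IsPrime.isPrimeFilter_compl [Lattice L] [BoundedOrder L] {J : Order.Ideal L}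
    (hJ : J.IsPrime) : IsPrimeFilter (J : Set L)ᶜ := by
  refine ⟨fun x hx y hxy hy => hx (J.lower hxy hy), fun x hx y hy hxy => ?_,
    hJ.top_notMem, fun h => h J.bot_mem, fun x y hxy => ?_⟩
  · exact (hJ.mem_or_mem hxy).elim hx hy
  · by_contra! h
    exact hxy (J.sup_mem (not_not.1 h.1) (not_not.1 h.2))

lemma exists_isPrimeFilter_of_disjoint [DistribLattice L] [BoundedOrder L]
    {F : Order.PFilter L} {I : Order.Ideal L} (hFI : Disjoint (F : Set L) I) :
    ∃ p, IsPrimeFilter p ∧ (F : Set L) ⊆ p ∧ Disjoint p I := by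
  obtain ⟨J, hJ, hIJ, hFJ⟩ := DistribLattice.prime_ideal_of_disjoint_filter_ideal hFI
  exact ⟨(J : Set L)ᶜ, hJ.isPrimeFilter_compl, Set.subset_compl_iff_disjoint_right.2 hFJ,
    disjoint_compl_left.mono_right hIJ⟩

lemma IsPrimeFilter.isPFilter_upperClosure_image [Lattice L] [BoundedOrder L] {L' F : Type*}
    [Lattice L'] [FunLike F L L'] [InfHomClass F L L'] (f : F) {q : Set L}
    (hq : IsPrimeFilter q) : Order.IsPFilter (upperClosure (f '' q) : Set L') := by
  obtain ⟨-, hinf, htop, -, -⟩ := hq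
  refine .of_def ⟨f ⊤, subset_upperClosure ⟨⊤, htop, rfl⟩⟩ ?_
    fun hxy hx => (upperClosure _).upper hxy hx
  rintro z₁ ⟨-, ⟨x₁, hx₁, rfl⟩, h₁⟩ z₂ ⟨-, ⟨x₂, hx₂, rfl⟩, h₂⟩
  refine ⟨f (x₁ ⊓ x₂), subset_upperClosure ⟨_, hinf _ hx₁ _ hx₂, rfl⟩, ?_, ?_⟩ <;>
    rw [map_inf]
  exacts [inf_le_left.trans h₁, inf_le_right.trans h₂]

end PrimeFilter

section HasDescendingPrimeChain

variable {L : Type*} [Lattice L] [BoundedOrder L]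

/-- `CodimGE a n` unfolds to: every prime filter containing `a` has a descending
prime chain of length `n`. -/
def HasDescendingPrimeChain (p : Set L) (n : ℕ) : Prop :=
  ∃ q : Fin (n + 1) → Set L, (∀ i, IsPrimeFilter (q i)) ∧ StrictAnti q ∧ q 0 = p

lemma hasDescendingPrimeChain_zero {p : Set L} (hp : IsPrimeFilter p) :
    HasDescendingPrimeChain p 0 :=
  ⟨![p], fun i => by fin_cases i; exact hp, strictAnti_vecEmpty, rfl⟩

lemma HasDescendingPrimeChain.cons {p q : Set L} {n : ℕ} (hp : IsPrimeFilter p) (hqp : q ⊂ p)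
    (hq : HasDescendingPrimeChain q n) : HasDescendingPrimeChain p (n + 1) := by
  obtain ⟨r, hr, hr_anti, rfl⟩ := hq
  exact ⟨Matrix.vecCons p r, Fin.cases hp hr, hr_anti.vecCons hqp, rfl⟩

lemma HasDescendingPrimeChain.exists_ssubset {p : Set L} {n : ℕ}
    (hp : HasDescendingPrimeChain p (n + 1)) :
    ∃ q ⊂ p, IsPrimeFilter q ∧ HasDescendingPrimeChain q n := by
  obtain ⟨r, hr, hr_anti, rfl⟩ := hp
  exact ⟨r 1, hr_anti Fin.zero_lt_one, hr 1, Fin.tail r, fun i => hr i.succ,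
    hr_anti.comp_strictMono (Fin.strictMono_succ), rfl⟩

end HasDescendingPrimeChain

namespace CoheytingHom

variable {L L' : Type*} [CoheytingAlgebra L] [CoheytingAlgebra L'] (φ : CoheytingHom L L')

/-- Going down for prime filters. -/
lemma exists_isPrimeFilter_ssubset {p' : Set L'} (hp' : IsPrimeFilter p') {q : Set L}
    (hq : IsPrimeFilter q) (hqp : q ⊂ φ ⁻¹' p') :
    ∃ q', IsPrimeFilter q' ∧ q' ⊂ p' ∧ q ⊆ φ ⁻¹' q' := by
  obtain ⟨b, hbp, hbq⟩ := Set.exists_of_ssubset hqp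
  let F := (hq.isPFilter_upperClosure_image φ).toPFilter
  let I := hp'.isIdeal_compl.toIdeal ⊔ Order.Ideal.principal (φ b)
  have ⟨hq_up, _, _, _, hq_prime⟩ := hq
  have ⟨hp'_up, _, _, hp'_bot, _⟩ := hp'
  have mem_I {z : L'} : z ∈ I ↔ ∃ c ∉ p', z ≤ c ⊔ φ b :=
    Lattice.mem_ideal_sup_principal _ _ _
  have hFI : Disjoint (F : Set L') I := by
    refine Set.disjoint_left.2 ?_
    rintro z ⟨-, ⟨x, hx, rfl⟩, hxz⟩ hzI
    obtain ⟨c, hc, hzc⟩ := mem_I.1 hzI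
    have hxb : x \ b ∈ q := (hq_prime _ _ (hq_up _ hx _ le_sup_sdiff)).resolve_left hbq
    have hxbc : φ (x \ b) ≤ c := by
      rw [map_sdiff, sdiff_le_iff, sup_comm]
      exact hxz.trans hzc
    exact hc (hp'_up _ (hqp.subset hxb) _ hxbc)
  obtain ⟨r, hr, hFr, hrI⟩ := exists_isPrimeFilter_of_disjoint hFI
  refine ⟨r, hr, ⟨fun z hz => ?_, fun hpr => ?_⟩,
    fun x hx => hFr (subset_upperClosure ⟨x, hx, rfl⟩)⟩
  · by_contra hzp
    exact Set.disjoint_left.1 hrI hz (mem_I.2 ⟨z, hzp, le_sup_left⟩)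
  · exact Set.disjoint_left.1 hrI (hpr hbp) (mem_I.2 ⟨⊥, hp'_bot, le_sup_right⟩)

end CoheytingHom

lemma HasDescendingPrimeChain.map {L L' : Type*} [CoheytingAlgebra L] [CoheytingAlgebra L']
    (φ : CoheytingHom L L') {q : Set L} {p' : Set L'} {n : ℕ}
    (hq : HasDescendingPrimeChain q n) (hp' : IsPrimeFilter p') (hqp : q ⊆ φ ⁻¹' p') :
    HasDescendingPrimeChain p' n := by
  induction n generalizing q p' with
  | zero => exact hasDescendingPrimeChain_zero hp'
  | succ n ih =>
    obtain ⟨q₁, hq₁q, hq₁_prime, hq₁⟩ := hq.exists_ssubset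
    obtain ⟨r, hr, hrp, hq₁r⟩ :=
      φ.exists_isPrimeFilter_ssubset hp' hq₁_prime (hq₁q.trans_subset hqp)
    exact (ih hq₁ hr hq₁r).cons hp' hrp

theorem stmt6 {L L' : Type*} [CoheytingAlgebra L] [CoheytingAlgebra L']
    (φ : CoheytingHom L L') (d : ℕ) (a : L)
    (h : CodimGE a d) :
    CodimGE (φ a) d := fun _ hp' ha =>
  HasDescendingPrimeChain.map φ (h _ (hp'.comap φ) ha) hp' subset_rfl
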